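/- arXiv:2412.06663 — 6 statements merged into one kernel-verified Lean document; each statement's English description precedes it below -/
import Mathlib

section
/- If the relation P satisfies the Weak Supplementation Principle and there exist two distinct elements of U, then there exist x, y ∈ U with Ext x y. -/
variable {U : Type*}

/-- `x` is an ingrediens of `y`. -/
def Ing (P : U → U → Prop) (x y : U) : Prop := x = y ∨ P x y

/-- `x` and `y` overlap. -/
def Ov (P : U → U → Prop) (x y : U) : Prop := ∃ z, Ing P z x ∧ Ing P z y

/-- `x` is exterior to `y`. -/
def MExt (P : U → U → Prop) (x y : U) : Prop := ¬ Ov P x y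

/-- `x` is a mereological sum of all elements of `S`. -/
def MSum (P : U → U → Prop) (x : U) (S : Set U) : Prop :=
  (∀ s ∈ S, Ing P s x) ∧ ∀ u, Ing P u x → ∃ s ∈ S, Ov P s u

/-- `x` is a supremum (least upper bound) of `S`. -/
def MSup (P : U → U → Prop) (x : U) (S : Set U) : Prop :=
  (∀ s ∈ S, Ing P s x) ∧ ∀ u, (∀ s ∈ S, Ing P s u) → Ing P x u

/-- `x` and `y` cross (properly overlap). -/
def POv (P : U → U → Prop) (x y : U) : Prop :=
  x ≠ y ∧ ¬ P x y ∧ ¬ P y x ∧ ∃ z, P z x ∧ P z y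

theorem Ov.exists_part_of_ne {P : U → U → Prop} {a b : U} (h : Ov P a b) (hab : a ≠ b) :
    ∃ x y, P y x := by
  obtain ⟨z, hza | hza, hzb | hzb⟩ := h
  · exact absurd (hza.symm.trans hzb) hab
  · exact ⟨b, z, hzb⟩
  all_goals exact ⟨a, z, hza⟩

theorem stmt_1 (P : U → U → Prop)
    (hWSP : ∀ x y, P y x → ∃ z, P z x ∧ MExt P z y)
    (h2 : ∃ a b : U, a ≠ b) :
    ∃ x y : U, MExt P x y := by
  obtain ⟨a, b, hab⟩ := h2
  by_cases hov : Ov P a b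
  · obtain ⟨x, y, hyx⟩ := hov.exists_part_of_ne hab
    obtain ⟨z, -, hzy⟩ := hWSP x y hyx
    exact ⟨z, y, hzy⟩
  · exact ⟨a, b, hov⟩
end

section
/- Assume P is transitive. Then the Weak Supplementation Principle holds if and only if P is irreflexive and every mereological sum of a singleton is that element itself, i.e. ∀ x y, Sum x {y} → x = y. -/
variable {U : Type*}

namespace Mereology

variable {P : U → U → Prop}

theorem ing_refl (x : U) : Ing P x x := Or.inl rfl

theorem Ov.symm {x y : U} (h : Ov P x y) : Ov P y x :=
  let ⟨z, hzx, hzy⟩ := h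
  ⟨z, hzy, hzx⟩

theorem ov_of_ing {x y : U} (h : Ing P x y) : Ov P x y := ⟨x, ing_refl x, h⟩

theorem msum_singleton_iff {x y : U} :
    MSum P x {y} ↔ Ing P y x ∧ ∀ u, Ing P u x → Ov P y u := by
  simp only [MSum, Set.mem_singleton_iff, forall_eq, exists_eq_left]

variable (P) in
def WeakSupplementation : Prop := ∀ x y, P y x → ∃ z, P z x ∧ MExt P z y

namespace WeakSupplementation

theorem irrefl (h : WeakSupplementation P) (x : U) : ¬ P x x := fun hxx =>
  let ⟨_, hzx, hext⟩ := h x x hxx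
  hext (ov_of_ing (Or.inr hzx))

theorem eq_of_msum_singleton (h : WeakSupplementation P) {x y : U} (hsum : MSum P x {y}) :
    x = y := by
  obtain ⟨hyx, hov⟩ := msum_singleton_iff.mp hsum
  by_contra hne
  obtain ⟨z, hzx, hext⟩ := h x y (hyx.resolve_left (Ne.symm hne))
  exact hext (Ov.symm (hov z (Or.inr hzx)))

end WeakSupplementation

/-- If `y` is a proper part of `x` with no part of `x` exterior to it, then `x` is a sum of `{y}`
distinct from `y`; irreflexivity and uniqueness of singleton sums rule this out. -/
theorem weakSupplementation_of_irrefl_of_msum_singleton (hirr : ∀ x, ¬ P x x)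
    (hsum : ∀ x y : U, MSum P x {y} → x = y) : WeakSupplementation P := by
  intro x y hyx
  by_contra! hno
  have hov : ∀ u, Ing P u x → Ov P y u := by
    rintro u (rfl | hux)
    · exact ov_of_ing (Or.inr hyx)
    · exact Ov.symm (not_not.mp (hno u hux))
  obtain rfl := hsum x y (msum_singleton_iff.mpr ⟨Or.inr hyx, hov⟩)
  exact hirr x hyx

end Mereology

open Mereology in
theorem stmt_2_general (P : U → U → Prop) :
    (∀ x y, P y x → ∃ z, P z x ∧ MExt P z y) ↔
      ((∀ x, ¬ P x x) ∧ ∀ x y : U, MSum P x {y} → x = y) :=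
  ⟨fun h => ⟨WeakSupplementation.irrefl h, fun _ _ => WeakSupplementation.eq_of_msum_singleton h⟩,
    fun h => weakSupplementation_of_irrefl_of_msum_singleton h.1 h.2⟩

theorem stmt_2 (P : U → U → Prop)
    (htrans : ∀ x y z, P x y → P y z → P x z) :
    (∀ x y, P y x → ∃ z, P z x ∧ MExt P z y) ↔
      ((∀ x, ¬ P x x) ∧ ∀ x y : U, MSum P x {y} → x = y) :=
  stmt_2_general P
end

section
/- Assume P is transitive and irreflexive. If mereological sums are unique, i.e. ∀ S x y, Sum x S → Sum y S → x = y, then the Weak Supplementation Principle holds. -/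
/-!
If every proper part of `x` overlapped its proper part `y`, then `x` would be a mereological sum
of `{y}`, just as `y` is; uniqueness of sums would force `x = y`, contradicting irreflexivity.
-/

variable {U : Type*}

section

variable {P : U → U → Prop} {x y : U}

theorem Ing.refl (P : U → U → Prop) (x : U) : Ing P x x := Or.inl rfl

theorem Ing.ov (h : Ing P x y) : Ov P x y := ⟨x, Ing.refl P x, h⟩

theorem Ov.symm (h : Ov P x y) : Ov P y x :=
  let ⟨z, hzx, hzy⟩ := h
  ⟨z, hzy, hzx⟩

theorem not_mext_iff : ¬ MExt P x y ↔ Ov P x y := not_not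

theorem msum_singleton_iff : MSum P x {y} ↔ Ing P y x ∧ ∀ u, Ing P u x → Ov P y u := by
  simp only [MSum, Set.mem_singleton_iff, forall_eq, exists_eq_left]

theorem msum_singleton_self (P : U → U → Prop) (y : U) : MSum P y {y} :=
  msum_singleton_iff.2 ⟨Ing.refl P y, fun _ hu => hu.ov.symm⟩

end

theorem stmt_3_general (P : U → U → Prop)
    (hirr : ∀ x, ¬ P x x)
    (huniq : ∀ (S : Set U) (x y : U), MSum P x S → MSum P y S → x = y) :
    ∀ x y, P y x → ∃ z, P z x ∧ MExt P z y := by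
  intro x y hyx
  by_contra! hnosupp
  have hsum : MSum P x {y} := by
    refine msum_singleton_iff.2 ⟨Or.inr hyx, ?_⟩
    rintro u (rfl | hux)
    · exact Ing.ov (Or.inr hyx)
    · exact (not_mext_iff.1 (hnosupp u hux)).symm
  obtain rfl := huniq {y} x y hsum (msum_singleton_self P y)
  exact hirr x hyx

theorem stmt_3 (P : U → U → Prop)
    (htrans : ∀ x y z, P x y → P y z → P x z)
    (hirr : ∀ x, ¬ P x x)
    (huniq : ∀ (S : Set U) (x y : U), MSum P x S → MSum P y S → x = y) :
    ∀ x y, P y x → ∃ z, P z x ∧ MExt P z y :=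
  stmt_3_general P hirr huniq
end

section
/- Assume P is transitive and asymmetric and satisfies the Strong Supplementation Principle. Then mereological sums are unique: for every S : Set U and all x, y ∈ U, if Sum x S and Sum y S then x = y. -/
variable {U : Type*}

/-!
Under transitivity and strong supplementation every mereological sum of `S` is a least upper
bound of `S`: if `x` were not an ingrediens of an upper bound `u`, supplementation would give an
ingrediens `z` of `x` exterior to `u`, yet `z` overlaps some `s ∈ S`, and `s` lies in `u`.
Asymmetry makes `Ing` antisymmetric, so least upper bounds are unique.
-/

section

variable {P : U → U → Prop}

theorem Ing.trans (htrans : ∀ x y z, P x y → P y z → P x z) {x y z : U}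
    (hxy : Ing P x y) (hyz : Ing P y z) : Ing P x z := by
  rcases hxy with rfl | hxy
  · exact hyz
  rcases hyz with rfl | hyz
  · exact Or.inr hxy
  · exact Or.inr (htrans _ _ _ hxy hyz)

theorem Ing.antisymm (hasym : ∀ x y, ¬ (P x y ∧ P y x)) {x y : U}
    (hxy : Ing P x y) (hyx : Ing P y x) : x = y := by
  rcases hxy with rfl | hxy
  · rfl
  rcases hyx with rfl | hyx
  · rfl
  · exact absurd ⟨hxy, hyx⟩ (hasym x y)

theorem MSum.mSup (htrans : ∀ x y z, P x y → P y z → P x z)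
    (hSSP : ∀ x y, ¬ Ing P x y → ∃ z, Ing P z x ∧ MExt P z y) {x : U} {S : Set U}
    (hx : MSum P x S) : MSup P x S := by
  refine ⟨hx.1, fun u hu => ?_⟩
  by_contra hxu
  obtain ⟨z, hzx, hzu⟩ := hSSP x u hxu
  obtain ⟨s, hsS, w, hws, hwz⟩ := hx.2 z hzx
  exact hzu ⟨w, hwz, hws.trans htrans (hu s hsS)⟩

theorem MSup.unique (hasym : ∀ x y, ¬ (P x y ∧ P y x)) {x y : U} {S : Set U}
    (hx : MSup P x S) (hy : MSup P y S) : x = y :=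
  (hx.2 y hy.1).antisymm hasym (hy.2 x hx.1)

end

theorem stmt_6 (P : U → U → Prop)
    (htrans : ∀ x y z, P x y → P y z → P x z)
    (hasym : ∀ x y, ¬ (P x y ∧ P y x))
    (hSSP : ∀ x y, ¬ Ing P x y → ∃ z, Ing P z x ∧ MExt P z y) :
    ∀ (S : Set U) (x y : U), MSum P x S → MSum P y S → x = y := by
  intro S x y hx hy
  exact (hx.mSup htrans hSSP).unique hasym (hy.mSup htrans hSSP)
end

section
/- If P satisfies the Strong Supplementation Principle, then the Proper Parts Principle holds: for all x, y ∈ U, if x has at least one part and every part of x is a part of y, then Ing x y. -/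
variable {U : Type*}

theorem ov_of_ing_of_forall_part {P : U → U → Prop} {x y z : U} (hx : ∃ w, P w x)
    (hsub : ∀ u, P u x → P u y) (hz : Ing P z x) : Ov P z y := by
  rcases hz with rfl | hzx
  · obtain ⟨w, hw⟩ := hx
    exact ⟨w, Or.inr hw, Or.inr (hsub w hw)⟩
  · exact ⟨z, Or.inl rfl, Or.inr (hsub z hzx)⟩

theorem stmt_15 (P : U → U → Prop)
    (hSSP : ∀ x y, ¬ Ing P x y → ∃ z, Ing P z x ∧ MExt P z y) :
    ∀ x y : U, (∃ z, P z x) → (∀ u, P u x → P u y) → Ing P x y := by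
  intro x y hx hsub
  by_contra hxy
  obtain ⟨z, hzx, hzy⟩ := hSSP x y hxy
  exact hzy (ov_of_ing_of_forall_part hx hsub hzx)
end

section
/- If the relation Ing is antisymmetric (∀ x y, Ing x y → Ing y x → x = y) and the Proper Parts Principle holds (∀ x y, (∃ z, P z x) → (∀ u, P u x → P u y) → Ing x y), then extensionality with respect to parthood holds: for all x, y, if x has at least one part and x and y have exactly the same parts, then x = y. -/
variable {U : Type*}

theorem stmt_17 (P : U → U → Prop)
    (hanti : ∀ x y, Ing P x y → Ing P y x → x = y)
    (hPPP : ∀ x y, (∃ z, P z x) → (∀ u, P u x → P u y) → Ing P x y) :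
    ∀ x y : U, (∃ z, P z x) → (∀ u, P u x ↔ P u y) → x = y := by
  rintro x y ⟨z, hz⟩ hparts
  have hy : ∃ z, P z y := ⟨z, (hparts z).1 hz⟩
  exact hanti x y (hPPP x y ⟨z, hz⟩ fun u => (hparts u).1) (hPPP y x hy fun u => (hparts u).2)
end
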